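/- Let p be a prime and G = C_p ≀ C_p the regular wreath product (C_p)^p ⋊ C_p. Then exp(G) = p^2 while gexp(G) = p; in particular gexp(G) < exp(G). -/
import Mathlib


noncomputable def gexp (G : Type*) [Group G] : ℕ :=
  sInf {n | ∃ S : Finset G, Subgroup.closure (S : Set G) = ⊤ ∧ S.lcm orderOf = n}

/-- The cyclic shift automorphism of `(C_p)^p`, coordinates indexed by `ZMod p`. -/
def shiftAut (p : ℕ) (k : ZMod p) : MulAut (ZMod p → Multiplicative (ZMod p)) where
  toFun f := fun x => f (x - k)
  invFun f := fun x => f (x + k)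
  left_inv f := funext fun x => by
    show f (x + k - k) = f x
    rw [add_sub_cancel_right]
  right_inv f := funext fun x => by
    show f (x - k + k) = f x
    rw [sub_add_cancel]
  map_mul' f g := rfl

/-- The action of `C_p` on `(C_p)^p` cyclically permuting the coordinates. -/
def shiftHom (p : ℕ) :
    Multiplicative (ZMod p) →* MulAut (ZMod p → Multiplicative (ZMod p)) where
  toFun k := shiftAut p k.toAdd
  map_one' := by
    ext f x
    show f (x - Multiplicative.toAdd 1) = f x
    simp
  map_mul' a b := by
    ext f x
    show f (x - Multiplicative.toAdd (a * b)) = f (x - a.toAdd - b.toAdd)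
    rw [toAdd_mul, sub_sub]

/-- The regular wreath product `C_p ≀ C_p = (C_p)^p ⋊ C_p`. -/
def CpWrCp (p : ℕ) : Type :=
  SemidirectProduct (ZMod p → Multiplicative (ZMod p)) (Multiplicative (ZMod p))
    (shiftHom p)

noncomputable instance (p : ℕ) : Group (CpWrCp p) :=
  inferInstanceAs (Group (SemidirectProduct _ _ (shiftHom p)))

open SemidirectProduct Multiplicative in
theorem aux (p : ℕ) (hp : p.Prime) :
    Monoid.exponent ((ZMod p → Multiplicative (ZMod p)) ⋊[shiftHom p]
      Multiplicative (ZMod p)) = p ^ 2 ∧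
    gexp ((ZMod p → Multiplicative (ZMod p)) ⋊[shiftHom p] Multiplicative (ZMod p)) = p := by
  haveI : Fact p.Prime := ⟨hp⟩
  haveI : Fact (1 < p) := ⟨hp.one_lt⟩
  set N := ZMod p → Multiplicative (ZMod p) with hNdef
  set Q := Multiplicative (ZMod p) with hQdef
  set W := N ⋊[shiftHom p] Q with hW
  -- basic exponent-p facts
  have hQ : ∀ k : Q, k ^ p = 1 := by
    intro k
    rw [← ofAdd_toAdd (k ^ p), toAdd_pow, nsmul_eq_mul, ZMod.natCast_self, zero_mul, ofAdd_zero]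
  have hN : ∀ f : N, f ^ p = 1 := by
    intro f
    funext x
    show (f x) ^ p = 1
    exact hQ (f x)
  -- the key val lemma
  have hval : ∀ k : Q, k = (ofAdd (1 : ZMod p)) ^ (k.toAdd).val := by
    intro k
    rw [← ofAdd_nsmul, nsmul_eq_mul, mul_one, ZMod.natCast_val, ZMod.cast_id, ofAdd_toAdd]
  have htoAdd : ∀ i : ℕ, ((ofAdd (1 : ZMod p)) ^ i).toAdd = (i : ZMod p) := by
    intro i; rw [toAdd_pow, toAdd_ofAdd, nsmul_eq_mul, mul_one]
  -- power formula
  have hpow : ∀ (g : W) (n : ℕ),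
      g ^ n = ⟨∏ i ∈ Finset.range n, shiftHom p (g.right ^ i) g.left, g.right ^ n⟩ := by
    intro g n
    induction n with
    | zero => refine SemidirectProduct.ext ?_ ?_ <;> simp
    | succ n ih =>
      rw [pow_succ, ih]
      refine SemidirectProduct.ext ?_ ?_
      · rw [mul_left, Finset.prod_range_succ]
      · rw [mul_right, pow_succ]
  -- every g^(p^2) = 1
  have hsq : ∀ g : W, g ^ p ^ 2 = 1 := by
    intro g
    have h1 : (g ^ p).right = 1 := by rw [hpow g p]; exact hQ _
    have h2 : g ^ p = inl ((g ^ p).left) := by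
      refine SemidirectProduct.ext ?_ ?_ <;> simp [h1]
    rw [pow_two, pow_mul, h2, ← map_pow, hN, map_one]
  -- δ and the order p^2 element
  set δ : N := Pi.mulSingle (0 : ZMod p) (ofAdd (1 : ZMod p)) with hδ
  have hδ0 : δ 0 = ofAdd (1 : ZMod p) := by simp [hδ]
  have hδne : ∀ y : ZMod p, y ≠ 0 → δ y = 1 := by
    intro y hy; simp [hδ, Pi.mulSingle_apply, hy]
  have hofadd1 : (ofAdd (1 : ZMod p)) ≠ 1 := by
    intro h
    have : (1 : ZMod p) = 0 := by simpa using h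
    exact one_ne_zero this
  set w : W := ⟨δ, ofAdd 1⟩ with hw
  have hwp : (w ^ p).left 0 = ofAdd (1 : ZMod p) := by
    rw [hpow w p]
    show (∏ i ∈ Finset.range p, shiftHom p ((ofAdd (1:ZMod p)) ^ i) δ) 0 = ofAdd (1 : ZMod p)
    rw [Finset.prod_apply]
    rw [Finset.prod_eq_single 0]
    · show δ (0 - ((ofAdd (1:ZMod p)) ^ 0).toAdd) = _
      simp [hδ0]
    · intro i hi hi0
      show δ (0 - ((ofAdd (1:ZMod p)) ^ i).toAdd) = 1
      rw [htoAdd]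
      apply hδne
      rw [zero_sub, neg_ne_zero]
      rw [Ne, ZMod.natCast_eq_zero_iff]
      intro hdvd
      exact hi0 (Nat.eq_zero_of_dvd_of_lt hdvd (Finset.mem_range.mp hi))
    · intro h
      exact absurd (Finset.mem_range.mpr hp.pos) h
  have hwp1 : w ^ p ≠ 1 := by
    intro h
    rw [h] at hwp
    exact hofadd1 hwp.symm
  have hord : orderOf w = p ^ 2 := by
    have := orderOf_eq_prime_pow (x := w) (p := p) (n := 1) (by simpa using hwp1) (hsq w)
    simpa using this
  have hexp : Monoid.exponent W = p ^ 2 := by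
    apply Nat.dvd_antisymm
    · exact Monoid.exponent_dvd_of_forall_pow_eq_one hsq
    · rw [← hord]; exact Monoid.order_dvd_exponent w
  refine ⟨hexp, ?_⟩
  -- generators of order p
  set a : W := inr (ofAdd (1 : ZMod p)) with ha
  set b : W := inl δ with hb
  have hane : a ≠ 1 := by
    intro h
    have h' : (inr (ofAdd (1 : ZMod p)) : W) = inr (1 : Q) := by rw [(inr : Q →* W).map_one]; exact h
    exact hofadd1 (inr_injective h')
  have hbne : b ≠ 1 := by
    intro h
    have hδ1 : δ = 1 := by
      have h' : (inl δ : W) = inl (1 : N) := by rw [(inl : N →* W).map_one]; exact h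
      exact inl_injective h'
    have := congrFun hδ1 0
    rw [hδ0] at this
    exact hofadd1 this
  have haord : orderOf a = p := orderOf_eq_prime (by rw [ha, ← map_pow, hQ, map_one]) hane
  have hbord : orderOf b = p := orderOf_eq_prime (by rw [hb, ← map_pow, hN, map_one]) hbne
  -- closure
  have hclos : Subgroup.closure ({a, b} : Set W) = ⊤ := by
    rw [eq_top_iff]
    intro g _
    have hamem : a ∈ Subgroup.closure ({a, b} : Set W) :=
      Subgroup.subset_closure (by simp)
    have hbmem : b ∈ Subgroup.closure ({a, b} : Set W) :=
      Subgroup.subset_closure (by simp)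
    have hinr : ∀ k : Q, (inr k : W) ∈ Subgroup.closure ({a, b} : Set W) := by
      intro k
      have h1 : (inr k : W) = a ^ (k.toAdd).val := by
        rw [ha, ← map_pow, ← hval k]
      rw [h1]
      exact pow_mem hamem _
    have hsingle : ∀ c : ZMod p, (inl (Pi.mulSingle c (ofAdd (1:ZMod p)) : N) : W)
        ∈ Subgroup.closure ({a, b} : Set W) := by
      intro c
      have hφ : shiftHom p ((ofAdd (1:ZMod p)) ^ c.val) δ
          = Pi.mulSingle c (ofAdd (1:ZMod p)) := by
        funext x
        show δ (x - ((ofAdd (1:ZMod p)) ^ c.val).toAdd) = _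
        rw [htoAdd, ZMod.natCast_val, ZMod.cast_id]
        by_cases hx : x = c
        · subst hx
          simp [hδ0]
        · rw [hδne _ (by rwa [sub_ne_zero]), Pi.mulSingle_apply, if_neg hx]
      have heq : (inl (Pi.mulSingle c (ofAdd (1:ZMod p)) : N) : W)
          = inr ((ofAdd (1:ZMod p)) ^ c.val) * b * inr (((ofAdd (1:ZMod p)) ^ c.val)⁻¹) := by
        rw [hb, ← inl_aut, hφ]
      rw [heq]
      exact mul_mem (mul_mem (hinr _) hbmem) (hinr _)
    have hinl : ∀ f : N, (inl f : W) ∈ Subgroup.closure ({a, b} : Set W) := by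
      intro f
      have hf : f ∈ Subgroup.comap (inl : N →* W) (Subgroup.closure ({a, b} : Set W)) := by
        have hfe : f = ∏ c : ZMod p, Pi.mulSingle c (f c) := (Finset.univ_prod_mulSingle f).symm
        rw [hfe]
        apply prod_mem
        intro c _
        have h2 : Pi.mulSingle c (f c)
            = (Pi.mulSingle c (ofAdd (1:ZMod p)) : N) ^ ((f c).toAdd).val := by
          rw [← Pi.mulSingle_pow, ← hval (f c)]
        rw [h2]
        exact pow_mem (by exact hsingle c) _
      exact hf
    rw [← inl_left_mul_inr_right g]
    exact mul_mem (hinl _) (hinr _)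
  -- gexp
  have hmem : p ∈ {n | ∃ S : Finset W,
      Subgroup.closure (S : Set W) = ⊤ ∧ S.lcm orderOf = n} := by
    refine ⟨{a, b}, by simpa using hclos, ?_⟩
    simp [Finset.lcm_insert, Finset.lcm_singleton, haord, hbord, Nat.lcm_self]
  apply le_antisymm
  · exact Nat.sInf_le hmem
  · apply le_csInf ⟨p, hmem⟩
    rintro n ⟨S, hS, rfl⟩
    have hdvd : S.lcm orderOf ∣ p ^ 2 := by
      apply Finset.lcm_dvd
      intro x _
      rw [← hexp]
      exact Monoid.order_dvd_exponent x
    obtain ⟨i, hi2, hie⟩ := (Nat.dvd_prime_pow hp).mp hdvd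
    have hine : i ≠ 0 := by
      intro h0
      rw [h0, pow_zero] at hie
      have hall : ∀ x ∈ S, x = 1 := by
        intro x hx
        have : orderOf x ∣ 1 := hie ▸ Finset.dvd_lcm hx
        rwa [Nat.dvd_one, orderOf_eq_one_iff] at this
      have hsub : (S : Set W) ⊆ {1} := fun x hx => hall x hx
      have hle : Subgroup.closure (S : Set W) ≤ ⊥ := by
        rw [← Subgroup.closure_singleton_one]
        exact Subgroup.closure_mono hsub
      rw [hS] at hle
      exact hane (hle (Subgroup.mem_top a))
    rw [hie]
    calc p = p ^ 1 := (pow_one p).symm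
      _ ≤ p ^ i := Nat.pow_le_pow_right hp.pos (Nat.one_le_iff_ne_zero.mpr hine)

theorem exponent_and_gexp_CpWrCp (p : ℕ) (hp : p.Prime) :
    Monoid.exponent (CpWrCp p) = p ^ 2 ∧ gexp (CpWrCp p) = p := aux p hp
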